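/- arXiv:math/0405496 — 9 statements merged into one kernel-verified Lean document; each statement's English description precedes it below -/
import Mathlib

section
/- Let H be an inner product space, a ∈ H a unit vector, ρ ∈ (0,1), and x_1,…,x_n ∈ H with ‖x_i − a‖ ≤ ρ for each i. Then √(1 − ρ²) · ∑_{i=1}^n ‖x_i‖ ≤ ‖∑_{i=1}^n x_i‖. -/
/-!
Expanding `‖x - a‖² ≤ ρ²` with `‖a‖ = 1` gives `‖x‖² + (1 - ρ²) ≤ 2 re ⟪x, a⟫`, so by AM-GM each
`x_i` satisfies `√(1 - ρ²) ‖x_i‖ ≤ re ⟪x_i, a⟫`. Summing, the right-hand sides add up to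
`re ⟪∑ x_i, a⟫ ≤ ‖∑ x_i‖` by Cauchy–Schwarz.
-/

open RCLike

open scoped InnerProductSpace

section

variable {𝕜 H : Type*} [RCLike 𝕜] [NormedAddCommGroup H] [InnerProductSpace 𝕜 H]

theorem sqrt_one_sub_sq_mul_norm_le_re_inner {x a : H} {ρ : ℝ} (ha : ‖a‖ = 1) (hρ : ρ ≤ 1)
    (hx : ‖x - a‖ ≤ ρ) : √(1 - ρ ^ 2) * ‖x‖ ≤ re ⟪x, a⟫_𝕜 := by
  have hρ0 : 0 ≤ ρ := (norm_nonneg _).trans hx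
  have hc : √(1 - ρ ^ 2) ^ 2 = 1 - ρ ^ 2 := Real.sq_sqrt (by nlinarith)
  have hsq : ‖x‖ ^ 2 - 2 * re ⟪x, a⟫_𝕜 + ‖a‖ ^ 2 ≤ ρ ^ 2 := by
    rw [← @norm_sub_sq 𝕜]
    exact pow_le_pow_left₀ (norm_nonneg _) hx 2
  rw [ha] at hsq
  nlinarith [sq_nonneg (‖x‖ - √(1 - ρ ^ 2))]

theorem mul_sum_norm_le_norm_sum_of_le_re_inner {ι : Type*} (s : Finset ι) (x : ι → H) {a : H}
    (ha : ‖a‖ ≤ 1) {c : ℝ} (hc : ∀ i ∈ s, c * ‖x i‖ ≤ re ⟪x i, a⟫_𝕜) :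
    c * ∑ i ∈ s, ‖x i‖ ≤ ‖∑ i ∈ s, x i‖ :=
  calc c * ∑ i ∈ s, ‖x i‖
      ≤ ∑ i ∈ s, re ⟪x i, a⟫_𝕜 := Finset.mul_sum s _ c ▸ Finset.sum_le_sum hc
    _ = re ⟪∑ i ∈ s, x i, a⟫_𝕜 := by rw [sum_inner, map_sum]
    _ ≤ ‖∑ i ∈ s, x i‖ * ‖a‖ := re_inner_le_norm _ _
    _ ≤ ‖∑ i ∈ s, x i‖ := mul_le_of_le_one_right (norm_nonneg _) ha

end

theorem stmt_1_general {𝕜 H : Type*} [RCLike 𝕜] [NormedAddCommGroup H] [InnerProductSpace 𝕜 H]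
    (n : ℕ) (a : H) (ha : ‖a‖ = 1) (ρ : ℝ) (hρ1 : ρ < 1)
    (x : ℕ → H) (h : ∀ i ∈ Finset.Icc 1 n, ‖x i - a‖ ≤ ρ) :
    Real.sqrt (1 - ρ ^ 2) * ∑ i ∈ Finset.Icc 1 n, ‖x i‖ ≤
      ‖∑ i ∈ Finset.Icc 1 n, x i‖ :=
  mul_sum_norm_le_norm_sum_of_le_re_inner (𝕜 := 𝕜) _ x ha.le fun i hi =>
    sqrt_one_sub_sq_mul_norm_le_re_inner ha hρ1.le (h i hi)

theorem stmt_1 {𝕜 H : Type*} [RCLike 𝕜] [NormedAddCommGroup H] [InnerProductSpace 𝕜 H]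
    (n : ℕ) (a : H) (ha : ‖a‖ = 1) (ρ : ℝ) (hρ0 : 0 < ρ) (hρ1 : ρ < 1)
    (x : ℕ → H) (h : ∀ i ∈ Finset.Icc 1 n, ‖x i - a‖ ≤ ρ) :
    Real.sqrt (1 - ρ ^ 2) * ∑ i ∈ Finset.Icc 1 n, ‖x i‖ ≤
      ‖∑ i ∈ Finset.Icc 1 n, x i‖ :=
  stmt_1_general (𝕜 := 𝕜) n a ha ρ hρ1 x h
end

section
/- Let H be an inner product space, a ∈ H a unit vector, x_1,…,x_n ∈ H and k_1,…,k_n ≥ 0 such that ‖x_i‖ − Re⟨a, x_i⟩ ≤ k_i for each i. Then 0 ≤ ∑_{i=1}^n ‖x_i‖ − ‖∑_{i=1}^n x_i‖ ≤ ∑_{i=1}^n k_i. -/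
open Finset RCLike

theorem sum_norm_sub_norm_sum_le_sum_norm_sub_re_inner {𝕜 H ι : Type*} [RCLike 𝕜]
    [NormedAddCommGroup H] [InnerProductSpace 𝕜 H] {a : H} (ha : ‖a‖ ≤ 1)
    (s : Finset ι) (x : ι → H) :
    ∑ i ∈ s, ‖x i‖ - ‖∑ i ∈ s, x i‖ ≤ ∑ i ∈ s, (‖x i‖ - re (inner 𝕜 a (x i))) := by
  have re_inner_sum_le : re (inner 𝕜 a (∑ i ∈ s, x i)) ≤ ‖∑ i ∈ s, x i‖ :=
    calc re (inner 𝕜 a (∑ i ∈ s, x i))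
        ≤ ‖a‖ * ‖∑ i ∈ s, x i‖ := re_inner_le_norm _ _
      _ ≤ ‖∑ i ∈ s, x i‖ := mul_le_of_le_one_left (norm_nonneg _) ha
  rw [inner_sum, map_sum] at re_inner_sum_le
  rw [sum_sub_distrib]
  linarith

theorem stmt_2_general {𝕜 H : Type*} [RCLike 𝕜] [NormedAddCommGroup H] [InnerProductSpace 𝕜 H]
    (n : ℕ) (a : H) (ha : ‖a‖ = 1) (x : ℕ → H) (k : ℕ → ℝ)
    (h : ∀ i ∈ Finset.Icc 1 n, ‖x i‖ - RCLike.re (inner 𝕜 a (x i) : 𝕜) ≤ k i) :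
    0 ≤ (∑ i ∈ Finset.Icc 1 n, ‖x i‖) - ‖∑ i ∈ Finset.Icc 1 n, x i‖ ∧
      (∑ i ∈ Finset.Icc 1 n, ‖x i‖) - ‖∑ i ∈ Finset.Icc 1 n, x i‖ ≤
        ∑ i ∈ Finset.Icc 1 n, k i :=
  ⟨sub_nonneg.2 (norm_sum_le _ _),
    (sum_norm_sub_norm_sum_le_sum_norm_sub_re_inner ha.le _ x).trans (sum_le_sum h)⟩

theorem stmt_2 {𝕜 H : Type*} [RCLike 𝕜] [NormedAddCommGroup H] [InnerProductSpace 𝕜 H]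
    (n : ℕ) (a : H) (ha : ‖a‖ = 1) (x : ℕ → H) (k : ℕ → ℝ)
    (hk : ∀ i ∈ Finset.Icc 1 n, 0 ≤ k i)
    (h : ∀ i ∈ Finset.Icc 1 n, ‖x i‖ - RCLike.re (inner 𝕜 a (x i) : 𝕜) ≤ k i) :
    0 ≤ (∑ i ∈ Finset.Icc 1 n, ‖x i‖) - ‖∑ i ∈ Finset.Icc 1 n, x i‖ ∧
      (∑ i ∈ Finset.Icc 1 n, ‖x i‖) - ‖∑ i ∈ Finset.Icc 1 n, x i‖ ≤
        ∑ i ∈ Finset.Icc 1 n, k i :=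
  stmt_2_general n a ha x k h
end

section
/- Let H be an inner product space, a ∈ H a unit vector, x_1,…,x_n ∈ H and r_1,…,r_n > 0 with ‖x_i − a‖ ≤ r_i for each i. Then 0 ≤ ∑_{i=1}^n ‖x_i‖ − ‖∑_{i=1}^n x_i‖ ≤ (1/2) ∑_{i=1}^n r_i². -/
/-
Project the sum onto the unit vector `a`: `‖∑ xᵢ‖ ≥ re ⟪a, ∑ xᵢ⟫ = ∑ re ⟪a, xᵢ⟫`, so the defect
`∑ ‖xᵢ‖ - ‖∑ xᵢ‖` is at most `∑ (‖xᵢ‖ - re ⟪a, xᵢ⟫)`. Each term is bounded by `‖xᵢ - a‖² / 2`,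
because `‖x - a‖² = ‖x‖² - 2 re ⟪a, x⟫ + 1` and `‖x‖² + 1 ≥ 2 ‖x‖`.
-/

section

variable {H : Type*} [NormedAddCommGroup H]

theorem norm_sub_re_inner_le_half_norm_sub_sq {𝕜 : Type*} [RCLike 𝕜] [InnerProductSpace 𝕜 H]
    {a : H} (ha : ‖a‖ = 1) (x : H) :
    ‖x‖ - RCLike.re (inner 𝕜 a x) ≤ ‖x - a‖ ^ 2 / 2 := by
  have hexpand : ‖x - a‖ ^ 2 = ‖x‖ ^ 2 - 2 * RCLike.re (inner 𝕜 a x) + 1 := by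
    rw [norm_sub_sq (𝕜 := 𝕜), ← inner_conj_symm x a, RCLike.conj_re, ha, one_pow]
  nlinarith [sq_nonneg (‖x‖ - 1)]

theorem sum_norm_sub_norm_sum_le (𝕜 : Type*) [RCLike 𝕜] [InnerProductSpace 𝕜 H] {ι : Type*}
    (s : Finset ι) {a : H} (ha : ‖a‖ = 1) (x : ι → H) :
    ∑ i ∈ s, ‖x i‖ - ‖∑ i ∈ s, x i‖ ≤ (1 / 2) * ∑ i ∈ s, ‖x i - a‖ ^ 2 := by
  have hproj : ∑ i ∈ s, RCLike.re (inner 𝕜 a (x i)) ≤ ‖∑ i ∈ s, x i‖ := by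
    simpa only [inner_sum, map_sum, ha, one_mul] using re_inner_le_norm (𝕜 := 𝕜) a (∑ i ∈ s, x i)
  have hterms : ∑ i ∈ s, (‖x i‖ - RCLike.re (inner 𝕜 a (x i))) ≤ ∑ i ∈ s, ‖x i - a‖ ^ 2 / 2 :=
    Finset.sum_le_sum fun i _ ↦ norm_sub_re_inner_le_half_norm_sub_sq ha (x i)
  rw [Finset.sum_sub_distrib, ← Finset.sum_div] at hterms
  linarith

end

theorem stmt_3_general {𝕜 H : Type*} [RCLike 𝕜] [NormedAddCommGroup H] [InnerProductSpace 𝕜 H]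
    (n : ℕ) (a : H) (ha : ‖a‖ = 1) (x : ℕ → H) (r : ℕ → ℝ)
    (h : ∀ i ∈ Finset.Icc 1 n, ‖x i - a‖ ≤ r i) :
    0 ≤ (∑ i ∈ Finset.Icc 1 n, ‖x i‖) - ‖∑ i ∈ Finset.Icc 1 n, x i‖ ∧
      (∑ i ∈ Finset.Icc 1 n, ‖x i‖) - ‖∑ i ∈ Finset.Icc 1 n, x i‖ ≤
        (1 / 2) * ∑ i ∈ Finset.Icc 1 n, (r i) ^ 2 := by
  refine ⟨sub_nonneg.mpr (norm_sum_le _ x), ?_⟩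
  calc (∑ i ∈ Finset.Icc 1 n, ‖x i‖) - ‖∑ i ∈ Finset.Icc 1 n, x i‖
      ≤ (1 / 2) * ∑ i ∈ Finset.Icc 1 n, ‖x i - a‖ ^ 2 :=
        sum_norm_sub_norm_sum_le 𝕜 _ ha x
    _ ≤ (1 / 2) * ∑ i ∈ Finset.Icc 1 n, (r i) ^ 2 := by
        gcongr with i hi
        exact h i hi

theorem stmt_3 {𝕜 H : Type*} [RCLike 𝕜] [NormedAddCommGroup H] [InnerProductSpace 𝕜 H]
    (n : ℕ) (a : H) (ha : ‖a‖ = 1) (x : ℕ → H) (r : ℕ → ℝ)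
    (hr : ∀ i ∈ Finset.Icc 1 n, 0 < r i)
    (h : ∀ i ∈ Finset.Icc 1 n, ‖x i - a‖ ≤ r i) :
    0 ≤ (∑ i ∈ Finset.Icc 1 n, ‖x i‖) - ‖∑ i ∈ Finset.Icc 1 n, x i‖ ∧
      (∑ i ∈ Finset.Icc 1 n, ‖x i‖) - ‖∑ i ∈ Finset.Icc 1 n, x i‖ ≤
        (1 / 2) * ∑ i ∈ Finset.Icc 1 n, (r i) ^ 2 :=
  stmt_3_general (𝕜 := 𝕜) n a ha x r h
end

section
/- Let H be an inner product space over ℝ or ℂ, x_1,…,x_n ∈ H, and k_{ij} > 0 for 1 ≤ i < j ≤ n such that ‖x_i‖·‖x_j‖ − Re⟨x_i, x_j⟩ ≤ k_{ij} for all 1 ≤ i < j ≤ n. Then (∑_{i=1}^n ‖x_i‖)² ≤ ‖∑_{i=1}^n x_i‖² + 2 ∑_{1 ≤ i < j ≤ n} k_{ij}. -/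
/-!
Expanding both squares, `(∑ ‖xᵢ‖)² - ‖∑ xᵢ‖²` is the double sum of the gaps
`‖xᵢ‖‖xⱼ‖ - Re⟪xᵢ, xⱼ⟫`. These are symmetric in `i, j` and vanish on the diagonal, so the double
sum is twice the sum over `i < j`, which is bounded termwise by the `k i j`.
-/

open Finset

theorem Finset.sum_sum_eq_two_mul_sum_sum_ite_lt {ι R : Type*} [LinearOrder ι]
    [NonAssocSemiring R] (s : Finset ι) (f : ι → ι → R)
    (hsymm : ∀ i j, f i j = f j i) (hdiag : ∀ i, f i i = 0) :
    ∑ i ∈ s, ∑ j ∈ s, f i j = 2 * ∑ i ∈ s, ∑ j ∈ s, if i < j then f i j else 0 := by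
  have hsplit : ∀ i j, f i j = (if i < j then f i j else 0) + (if j < i then f i j else 0) := by
    intro i j
    rcases lt_trichotomy i j with hij | rfl | hij
    · simp [hij, hij.not_gt]
    · simp [hdiag]
    · simp [hij, hij.not_gt]
  calc ∑ i ∈ s, ∑ j ∈ s, f i j
      = (∑ i ∈ s, ∑ j ∈ s, if i < j then f i j else 0)
          + ∑ i ∈ s, ∑ j ∈ s, if j < i then f i j else 0 := by
        simp_rw [← sum_add_distrib, ← hsplit]
    _ = 2 * ∑ i ∈ s, ∑ j ∈ s, if i < j then f i j else 0 := by
        rw [two_mul, sum_comm (f := fun i j => if j < i then f i j else 0)]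
        simp_rw [hsymm]

theorem sq_sum_norm_eq_norm_sum_sq_add {ι 𝕜 H : Type*} [RCLike 𝕜] [NormedAddCommGroup H]
    [InnerProductSpace 𝕜 H] (s : Finset ι) (x : ι → H) :
    (∑ i ∈ s, ‖x i‖) ^ 2 = ‖∑ i ∈ s, x i‖ ^ 2 +
      ∑ i ∈ s, ∑ j ∈ s, (‖x i‖ * ‖x j‖ - RCLike.re (inner 𝕜 (x i) (x j))) := by
  have hnorm : ‖∑ i ∈ s, x i‖ ^ 2 = ∑ i ∈ s, ∑ j ∈ s, RCLike.re (inner 𝕜 (x i) (x j)) := by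
    simp only [InnerProductSpace.norm_sq_eq_re_inner (𝕜 := 𝕜), sum_inner, inner_sum, map_sum]
    exact sum_comm
  simp only [sq, sum_mul_sum, hnorm, ← sum_add_distrib, add_sub_cancel]

theorem stmt_4_general {𝕜 H : Type*} [RCLike 𝕜] [NormedAddCommGroup H] [InnerProductSpace 𝕜 H]
    (n : ℕ) (x : ℕ → H) (k : ℕ → ℕ → ℝ)
    (h : ∀ i ∈ Finset.Icc 1 n, ∀ j ∈ Finset.Icc 1 n, i < j →
      ‖x i‖ * ‖x j‖ - RCLike.re (inner 𝕜 (x i) (x j) : 𝕜) ≤ k i j) :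
    (∑ i ∈ Finset.Icc 1 n, ‖x i‖) ^ 2 ≤ ‖∑ i ∈ Finset.Icc 1 n, x i‖ ^ 2 +
      2 * ∑ i ∈ Finset.Icc 1 n, ∑ j ∈ Finset.Icc 1 n,
        (if i < j then k i j else 0) := by
  rw [sq_sum_norm_eq_norm_sum_sq_add (𝕜 := 𝕜), sum_sum_eq_two_mul_sum_sum_ite_lt]
  · gcongr with i hi j hj
    split_ifs with hij
    exacts [h i hi j hj hij, le_rfl]
  · intro i j
    rw [mul_comm, inner_re_symm]
  · intro i
    rw [inner_self_eq_norm_mul_norm, sub_self]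

theorem stmt_4 {𝕜 H : Type*} [RCLike 𝕜] [NormedAddCommGroup H] [InnerProductSpace 𝕜 H]
    (n : ℕ) (x : ℕ → H) (k : ℕ → ℕ → ℝ)
    (hk : ∀ i ∈ Finset.Icc 1 n, ∀ j ∈ Finset.Icc 1 n, i < j → 0 < k i j)
    (h : ∀ i ∈ Finset.Icc 1 n, ∀ j ∈ Finset.Icc 1 n, i < j →
      ‖x i‖ * ‖x j‖ - RCLike.re (inner 𝕜 (x i) (x j) : 𝕜) ≤ k i j) :
    (∑ i ∈ Finset.Icc 1 n, ‖x i‖) ^ 2 ≤ ‖∑ i ∈ Finset.Icc 1 n, x i‖ ^ 2 +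
      2 * ∑ i ∈ Finset.Icc 1 n, ∑ j ∈ Finset.Icc 1 n,
        (if i < j then k i j else 0) :=
  stmt_4_general n x k h
end

section
/- Let H be an inner product space, x_1,…,x_n ∈ H, and k_{ij} > 0 for 1 ≤ i < j ≤ n with ‖x_i‖·‖x_j‖ − Re⟨x_i, x_j⟩ ≤ k_{ij}. Then 0 ≤ ∑_{i=1}^n ‖x_i‖ − ‖∑_{i=1}^n x_i‖ ≤ √2 · (∑_{1 ≤ i < j ≤ n} k_{ij})^{1/2}. -/
/-!
Expanding both squares, `(∑ ‖xᵢ‖)² - ‖∑ xᵢ‖² = 2 ∑_{i<j} (‖xᵢ‖‖xⱼ‖ - Re⟪xᵢ, xⱼ⟫) ≤ 2 ∑_{i<j} kᵢⱼ`.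
Since `0 ≤ ‖∑ xᵢ‖ ≤ ∑ ‖xᵢ‖`, the square of the difference `∑ ‖xᵢ‖ - ‖∑ xᵢ‖` is at most the
difference of the squares, and taking square roots gives the bound.
-/

open Finset

theorem Finset.sum_sum_eq_two_nsmul_sum_sum_lt {ι M : Type*} [LinearOrder ι] [AddCommMonoid M]
    (s : Finset ι) (f : ι → ι → M) (hsymm : ∀ i j, f i j = f j i) (hdiag : ∀ i, f i i = 0) :
    ∑ i ∈ s, ∑ j ∈ s, f i j = 2 • ∑ i ∈ s, ∑ j ∈ s, if i < j then f i j else 0 := by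
  have hsplit : ∀ i j, f i j = (if i < j then f i j else 0) + (if j < i then f j i else 0) := by
    intro i j
    rcases lt_trichotomy i j with hij | rfl | hij
    · simp [hij, hij.not_gt]
    · simp [hdiag]
    · simp [hij, hij.not_gt, hsymm i j]
  rw [sum_congr rfl fun i _ => sum_congr rfl fun j _ => hsplit i j]
  simp only [sum_add_distrib]
  rw [sum_comm (f := fun i j => if j < i then f j i else 0), two_nsmul]

theorem sq_sum_norm_sub_sq_norm_sum {𝕜 E ι : Type*} [RCLike 𝕜] [SeminormedAddCommGroup E]
    [InnerProductSpace 𝕜 E] (s : Finset ι) (x : ι → E) :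
    (∑ i ∈ s, ‖x i‖) ^ 2 - ‖∑ i ∈ s, x i‖ ^ 2 =
      ∑ i ∈ s, ∑ j ∈ s, (‖x i‖ * ‖x j‖ - RCLike.re (inner 𝕜 (x i) (x j))) := by
  rw [← @inner_self_eq_norm_sq 𝕜, sum_inner, sq, sum_mul_sum, map_sum, ← sum_sub_distrib]
  simp_rw [inner_sum, map_sum, ← sum_sub_distrib]

theorem sq_sum_norm_sub_sq_norm_sum_eq_two_mul {𝕜 E ι : Type*} [RCLike 𝕜]
    [SeminormedAddCommGroup E] [InnerProductSpace 𝕜 E] [LinearOrder ι] (s : Finset ι)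
    (x : ι → E) :
    (∑ i ∈ s, ‖x i‖) ^ 2 - ‖∑ i ∈ s, x i‖ ^ 2 =
      2 * ∑ i ∈ s, ∑ j ∈ s,
        if i < j then ‖x i‖ * ‖x j‖ - RCLike.re (inner 𝕜 (x i) (x j)) else 0 := by
  rw [sq_sum_norm_sub_sq_norm_sum (𝕜 := 𝕜), sum_sum_eq_two_nsmul_sum_sum_lt, nsmul_eq_mul,
    Nat.cast_ofNat]
  · intro i j
    rw [← inner_conj_symm (x i) (x j), RCLike.conj_re, mul_comm]
  · intro i
    rw [@inner_self_eq_norm_sq 𝕜, sq, sub_self]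

theorem sub_sq_le_sq_sub_sq {R : Type*} [CommRing R] [LinearOrder R] [IsStrictOrderedRing R]
    {a b : R} (hb : 0 ≤ b) (hba : b ≤ a) : (a - b) ^ 2 ≤ a ^ 2 - b ^ 2 := by
  nlinarith

theorem sum_norm_sub_norm_sum_le_s6 {𝕜 E ι : Type*} [RCLike 𝕜] [SeminormedAddCommGroup E]
    [InnerProductSpace 𝕜 E] [LinearOrder ι] (s : Finset ι) (x : ι → E) (k : ι → ι → ℝ)
    (h : ∀ i ∈ s, ∀ j ∈ s, i < j → ‖x i‖ * ‖x j‖ - RCLike.re (inner 𝕜 (x i) (x j)) ≤ k i j) :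
    ∑ i ∈ s, ‖x i‖ - ‖∑ i ∈ s, x i‖ ≤
      Real.sqrt 2 * Real.sqrt (∑ i ∈ s, ∑ j ∈ s, if i < j then k i j else 0) := by
  rw [← Real.sqrt_mul zero_le_two]
  apply Real.le_sqrt_of_sq_le
  calc (∑ i ∈ s, ‖x i‖ - ‖∑ i ∈ s, x i‖) ^ 2
      ≤ (∑ i ∈ s, ‖x i‖) ^ 2 - ‖∑ i ∈ s, x i‖ ^ 2 :=
        sub_sq_le_sq_sub_sq (norm_nonneg _) (norm_sum_le _ _)
    _ = 2 * ∑ i ∈ s, ∑ j ∈ s,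
          if i < j then ‖x i‖ * ‖x j‖ - RCLike.re (inner 𝕜 (x i) (x j)) else 0 :=
        sq_sum_norm_sub_sq_norm_sum_eq_two_mul s x
    _ ≤ 2 * ∑ i ∈ s, ∑ j ∈ s, if i < j then k i j else 0 := by
        gcongr with i hi j hj
        split_ifs with hij
        exacts [h i hi j hj hij, le_rfl]

theorem stmt_6_general {𝕜 H : Type*} [RCLike 𝕜] [NormedAddCommGroup H] [InnerProductSpace 𝕜 H]
    (n : ℕ) (x : ℕ → H) (k : ℕ → ℕ → ℝ)
    (h : ∀ i ∈ Finset.Icc 1 n, ∀ j ∈ Finset.Icc 1 n, i < j →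
      ‖x i‖ * ‖x j‖ - RCLike.re (inner 𝕜 (x i) (x j) : 𝕜) ≤ k i j) :
    0 ≤ (∑ i ∈ Finset.Icc 1 n, ‖x i‖) - ‖∑ i ∈ Finset.Icc 1 n, x i‖ ∧
      (∑ i ∈ Finset.Icc 1 n, ‖x i‖) - ‖∑ i ∈ Finset.Icc 1 n, x i‖ ≤
        Real.sqrt 2 * Real.sqrt (∑ i ∈ Finset.Icc 1 n, ∑ j ∈ Finset.Icc 1 n,
          (if i < j then k i j else 0)) :=
  ⟨sub_nonneg.2 (norm_sum_le _ _), sum_norm_sub_norm_sum_le_s6 _ x k h⟩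

theorem stmt_6 {𝕜 H : Type*} [RCLike 𝕜] [NormedAddCommGroup H] [InnerProductSpace 𝕜 H]
    (n : ℕ) (x : ℕ → H) (k : ℕ → ℕ → ℝ)
    (hk : ∀ i ∈ Finset.Icc 1 n, ∀ j ∈ Finset.Icc 1 n, i < j → 0 < k i j)
    (h : ∀ i ∈ Finset.Icc 1 n, ∀ j ∈ Finset.Icc 1 n, i < j →
      ‖x i‖ * ‖x j‖ - RCLike.re (inner 𝕜 (x i) (x j) : 𝕜) ≤ k i j) :
    0 ≤ (∑ i ∈ Finset.Icc 1 n, ‖x i‖) - ‖∑ i ∈ Finset.Icc 1 n, x i‖ ∧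
      (∑ i ∈ Finset.Icc 1 n, ‖x i‖) - ‖∑ i ∈ Finset.Icc 1 n, x i‖ ≤
        Real.sqrt 2 * Real.sqrt (∑ i ∈ Finset.Icc 1 n, ∑ j ∈ Finset.Icc 1 n,
          (if i < j then k i j else 0)) :=
  stmt_6_general n x k h
end

section
/- Let H be an inner product space, x_1,…,x_n ∈ H, and r > 0 such that ‖x_i − x_j‖ ≤ r for all 1 ≤ i < j ≤ n. Then (∑_{i=1}^n ‖x_i‖)² ≤ ‖∑_{i=1}^n x_i‖² + (n(n−1)/2) r². -/
/-!
Expanding both squares, `(∑ ‖xᵢ‖)² - ‖∑ xᵢ‖² = ∑_{i,j} (‖xᵢ‖‖xⱼ‖ - re ⟪xᵢ, xⱼ⟫)`, and each summand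
is at most `‖xᵢ - xⱼ‖² / 2` because `2‖xᵢ‖‖xⱼ‖ ≤ ‖xᵢ‖² + ‖xⱼ‖²`. The diagonal summands vanish and
the `n(n-1)` off-diagonal ones are at most `r² / 2`.
-/

open RCLike Finset

namespace Finset

theorem sum_sum_le_card_mul_card_sub_one_mul {ι : Type*} [DecidableEq ι] (s : Finset ι)
    (f : ι → ι → ℝ) (c : ℝ) (hdiag : ∀ i ∈ s, f i i = 0)
    (hoff : ∀ i ∈ s, ∀ j ∈ s, i ≠ j → f i j ≤ c) :
    ∑ i ∈ s, ∑ j ∈ s, f i j ≤ #s * (#s - 1) * c := by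
  have hrow : ∀ i ∈ s, ∑ j ∈ s, f i j ≤ (#s - 1) * c := fun i hi =>
    calc ∑ j ∈ s, f i j = ∑ j ∈ s.erase i, f i j := (sum_erase s (hdiag i hi)).symm
      _ ≤ ∑ _j ∈ s.erase i, c := sum_le_sum fun j hj =>
          hoff i hi j (mem_of_mem_erase hj) (ne_of_mem_erase hj).symm
      _ = (#s - 1) * c := by rw [sum_const, nsmul_eq_mul, cast_card_erase_of_mem hi]
  calc ∑ i ∈ s, ∑ j ∈ s, f i j ≤ ∑ _i ∈ s, (#s - 1) * c := sum_le_sum hrow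
    _ = #s * (#s - 1) * c := by rw [sum_const, nsmul_eq_mul, mul_assoc]

end Finset

section InnerProductSpace

variable {𝕜 E : Type*} [RCLike 𝕜] [NormedAddCommGroup E] [InnerProductSpace 𝕜 E]

theorem norm_mul_norm_sub_re_inner_le (x y : E) :
    ‖x‖ * ‖y‖ - re (inner 𝕜 x y) ≤ ‖x - y‖ ^ 2 / 2 := by
  rw [norm_sub_sq (𝕜 := 𝕜)]
  nlinarith [sq_nonneg (‖x‖ - ‖y‖)]

theorem norm_sum_sq_eq_sum_sum_re_inner {ι : Type*} (s : Finset ι) (x : ι → E) :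
    ‖∑ i ∈ s, x i‖ ^ 2 = ∑ i ∈ s, ∑ j ∈ s, re (inner 𝕜 (x i) (x j)) := by
  rw [← inner_self_eq_norm_sq (𝕜 := 𝕜), sum_inner, map_sum]
  simp only [inner_sum, map_sum]

end InnerProductSpace

theorem sq_sum_norm_le_norm_sum_sq_add {𝕜 E ι : Type*} [RCLike 𝕜] [NormedAddCommGroup E]
    [InnerProductSpace 𝕜 E] (s : Finset ι) (x : ι → E) :
    (∑ i ∈ s, ‖x i‖) ^ 2 ≤ ‖∑ i ∈ s, x i‖ ^ 2 + (∑ i ∈ s, ∑ j ∈ s, ‖x i - x j‖ ^ 2) / 2 := by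
  have hterm : ∑ i ∈ s, ∑ j ∈ s, (‖x i‖ * ‖x j‖ - re (inner 𝕜 (x i) (x j)))
      ≤ ∑ i ∈ s, ∑ j ∈ s, ‖x i - x j‖ ^ 2 / 2 :=
    sum_le_sum fun i _ => sum_le_sum fun j _ => norm_mul_norm_sub_re_inner_le (x i) (x j)
  rw [sq, sum_mul_sum, norm_sum_sq_eq_sum_sum_re_inner (𝕜 := 𝕜)]
  simp only [sum_sub_distrib, sum_div] at hterm ⊢
  linarith

theorem stmt_8_general {𝕜 H : Type*} [RCLike 𝕜] [NormedAddCommGroup H] [InnerProductSpace 𝕜 H]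
    (n : ℕ) (x : ℕ → H) (r : ℝ)
    (h : ∀ i ∈ Finset.Icc 1 n, ∀ j ∈ Finset.Icc 1 n, i < j → ‖x i - x j‖ ≤ r) :
    (∑ i ∈ Finset.Icc 1 n, ‖x i‖) ^ 2 ≤ ‖∑ i ∈ Finset.Icc 1 n, x i‖ ^ 2 +
      ((n : ℝ) * (n - 1) / 2) * r ^ 2 := by
  have hpair : ∀ i ∈ Icc 1 n, ∀ j ∈ Icc 1 n, i ≠ j → ‖x i - x j‖ ^ 2 ≤ r ^ 2 := by
    intro i hi j hj hij
    rcases hij.lt_or_gt with hlt | hgt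
    · exact pow_le_pow_left₀ (norm_nonneg _) (h i hi j hj hlt) 2
    · exact norm_sub_rev (x i) (x j) ▸ pow_le_pow_left₀ (norm_nonneg _) (h j hj i hi hgt) 2
  have hcount := sum_sum_le_card_mul_card_sub_one_mul (Icc 1 n)
    (fun i j => ‖x i - x j‖ ^ 2) (r ^ 2) (fun i _ => by simp) hpair
  rw [Nat.card_Icc, Nat.add_sub_cancel] at hcount
  calc (∑ i ∈ Icc 1 n, ‖x i‖) ^ 2
      ≤ ‖∑ i ∈ Icc 1 n, x i‖ ^ 2 + (∑ i ∈ Icc 1 n, ∑ j ∈ Icc 1 n, ‖x i - x j‖ ^ 2) / 2 :=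
        sq_sum_norm_le_norm_sum_sq_add (𝕜 := 𝕜) _ _
    _ ≤ ‖∑ i ∈ Icc 1 n, x i‖ ^ 2 + ((n : ℝ) * (n - 1) / 2) * r ^ 2 := by linarith

theorem stmt_8 {𝕜 H : Type*} [RCLike 𝕜] [NormedAddCommGroup H] [InnerProductSpace 𝕜 H]
    (n : ℕ) (x : ℕ → H) (r : ℝ) (hr : 0 < r)
    (h : ∀ i ∈ Finset.Icc 1 n, ∀ j ∈ Finset.Icc 1 n, i < j → ‖x i - x j‖ ≤ r) :
    (∑ i ∈ Finset.Icc 1 n, ‖x i‖) ^ 2 ≤ ‖∑ i ∈ Finset.Icc 1 n, x i‖ ^ 2 +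
      ((n : ℝ) * (n - 1) / 2) * r ^ 2 :=
  stmt_8_general (𝕜 := 𝕜) n x r h
end

section
/- Let H be an inner product space, x_1,…,x_n ∈ H, and p, q > 1 with 1/p + 1/q = 1. Then (∑_{i=1}^n ‖x_i‖)² ≤ ‖∑_{i=1}^n x_i‖² + ∑_{1 ≤ i < j ≤ n} (j − i)^{2/q} · (∑_{k=1}^{n−1} ‖Δx_k‖^p)^{2/p}, where Δx_k := x_{k+1} − x_k. -/
/-!
Expanding both squares, `(∑ ‖xᵢ‖)² - ‖∑ xᵢ‖²` is the sum over pairs `i < j` of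
`2 (‖xᵢ‖ ‖xⱼ‖ - Re ⟪xᵢ, xⱼ⟫)`, and each such term is at most `‖xⱼ - xᵢ‖²`. Writing
`xⱼ - xᵢ` as the telescoping sum of the `Δxₖ`, `i ≤ k < j`, the triangle inequality and Hölder's
inequality against the constant `1` give `‖xⱼ - xᵢ‖ ≤ (j - i)^(1/q) (∑ₖ ‖Δxₖ‖^p)^(1/p)`.
-/

open Finset

lemma Finset.sum_sum_eq_sum_sum_lt_add_swap {ι M : Type*} [LinearOrder ι] [AddCommMonoid M]
    (s : Finset ι) (f : ι → ι → M) (hf : ∀ i ∈ s, f i i = 0) :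
    ∑ i ∈ s, ∑ j ∈ s, f i j = ∑ i ∈ s, ∑ j ∈ s, if i < j then f i j + f j i else 0 := by
  have hsplit : ∀ i ∈ s, ∀ j ∈ s,
      f i j = (if i < j then f i j else 0) + if j < i then f i j else 0 := by
    intro i hi j _
    rcases lt_trichotomy i j with h | rfl | h
    · simp [h, h.not_gt]
    · simp [hf i hi]
    · simp [h, h.not_gt]
  have hswap : ∑ i ∈ s, ∑ j ∈ s, (if j < i then f i j else 0) =
      ∑ i ∈ s, ∑ j ∈ s, if i < j then f j i else 0 := sum_comm
  calc ∑ i ∈ s, ∑ j ∈ s, f i j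
      = ∑ i ∈ s, ∑ j ∈ s, ((if i < j then f i j else 0) + if j < i then f i j else 0) :=
        sum_congr rfl fun i hi => sum_congr rfl (hsplit i hi)
    _ = ∑ i ∈ s, ∑ j ∈ s, (if i < j then f i j else 0) +
          ∑ i ∈ s, ∑ j ∈ s, (if i < j then f j i else 0) := by
        rw [← hswap]; simp only [sum_add_distrib]
    _ = ∑ i ∈ s, ∑ j ∈ s, if i < j then f i j + f j i else 0 := by
        simp only [← sum_add_distrib, ite_add_ite, add_zero]

section InnerProductSpace

variable {𝕜 E : Type*} [RCLike 𝕜] [SeminormedAddCommGroup E] [InnerProductSpace 𝕜 E]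

lemma sq_sum_norm_eq_sq_norm_sum_add {ι : Type*} (s : Finset ι) (x : ι → E) :
    (∑ i ∈ s, ‖x i‖) ^ 2 = ‖∑ i ∈ s, x i‖ ^ 2 +
      ∑ i ∈ s, ∑ j ∈ s, (‖x i‖ * ‖x j‖ - RCLike.re (inner 𝕜 (x i) (x j))) := by
  have hnorm : ‖∑ i ∈ s, x i‖ ^ 2 = ∑ i ∈ s, ∑ j ∈ s, RCLike.re (inner 𝕜 (x i) (x j)) := by
    simp only [← inner_self_eq_norm_sq (𝕜 := 𝕜), sum_inner, inner_sum, map_sum]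
    exact sum_comm
  rw [sq, sum_mul_sum, hnorm]
  simp only [sum_sub_distrib]
  abel

lemma norm_mul_norm_sub_re_inner_add_swap_le (a b : E) :
    (‖a‖ * ‖b‖ - RCLike.re (inner 𝕜 a b)) + (‖b‖ * ‖a‖ - RCLike.re (inner 𝕜 b a)) ≤
      ‖b - a‖ ^ 2 := by
  rw [norm_sub_sq (𝕜 := 𝕜), inner_re_symm (𝕜 := 𝕜) b a]
  nlinarith [sq_nonneg (‖a‖ - ‖b‖)]

end InnerProductSpace

section Differences

variable {E : Type*} [SeminormedAddCommGroup E] {p q : ℝ}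

lemma norm_sub_le_rpow_mul_sum_norm_sub_rpow (hpq : p.HolderConjugate q) (x : ℕ → E) {i j : ℕ}
    (hij : i ≤ j) :
    ‖x j - x i‖ ≤ ((j : ℝ) - i) ^ (1 / q) * (∑ k ∈ Ico i j, ‖x (k + 1) - x k‖ ^ p) ^ (1 / p) := by
  have hholder := Real.inner_le_Lp_mul_Lq_of_nonneg (Ico i j) hpq
    (f := fun k => ‖x (k + 1) - x k‖) (g := fun _ => 1)
    (fun _ _ => norm_nonneg _) (fun _ _ => zero_le_one)
  simp only [mul_one, Real.one_rpow, sum_const, nsmul_eq_mul, Nat.card_Ico,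
    Nat.cast_sub hij] at hholder
  calc ‖x j - x i‖ = ‖∑ k ∈ Ico i j, (x (k + 1) - x k)‖ := by rw [sum_Ico_sub x hij]
    _ ≤ ∑ k ∈ Ico i j, ‖x (k + 1) - x k‖ := norm_sum_le _ _
    _ ≤ _ := hholder.trans_eq (mul_comm _ _)

lemma sq_norm_sub_le_rpow_mul_sum_norm_sub_rpow (hpq : p.HolderConjugate q) (x : ℕ → E)
    {i j n : ℕ} (hi : 1 ≤ i) (hij : i ≤ j) (hjn : j ≤ n) :
    ‖x j - x i‖ ^ 2 ≤
      ((j : ℝ) - i) ^ (2 / q) * (∑ k ∈ Icc 1 (n - 1), ‖x (k + 1) - x k‖ ^ p) ^ (2 / p) := by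
  set S := ∑ k ∈ Icc 1 (n - 1), ‖x (k + 1) - x k‖ ^ p
  have hS : 0 ≤ S := by positivity
  have hji : 0 ≤ (j : ℝ) - i := sub_nonneg.2 (by exact_mod_cast hij)
  have hsub : ∑ k ∈ Ico i j, ‖x (k + 1) - x k‖ ^ p ≤ S :=
    sum_le_sum_of_subset_of_nonneg (fun k hk => by simp only [mem_Ico, mem_Icc] at hk ⊢; omega)
      (fun _ _ _ => by positivity)
  calc ‖x j - x i‖ ^ 2 ≤ (((j : ℝ) - i) ^ (1 / q) * S ^ (1 / p)) ^ 2 := by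
        gcongr
        exact (norm_sub_le_rpow_mul_sum_norm_sub_rpow hpq x hij).trans
          (by gcongr; exact hpq.one_div_nonneg)
    _ = ((j : ℝ) - i) ^ (2 / q) * S ^ (2 / p) := by
        rw [mul_pow, ← Real.rpow_mul_natCast hji, ← Real.rpow_mul_natCast hS]
        congr 2 <;> push_cast <;> ring

end Differences

theorem stmt_12_general {𝕜 H : Type*} [RCLike 𝕜] [NormedAddCommGroup H] [InnerProductSpace 𝕜 H]
    (n : ℕ) (x : ℕ → H) (p q : ℝ) (hp : 1 < p)
    (hpq : 1 / p + 1 / q = 1) :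
    (∑ i ∈ Finset.Icc 1 n, ‖x i‖) ^ 2 ≤ ‖∑ i ∈ Finset.Icc 1 n, x i‖ ^ 2 +
      ∑ i ∈ Finset.Icc 1 n, ∑ j ∈ Finset.Icc 1 n,
        (if i < j then
          ((j : ℝ) - (i : ℝ)) ^ ((2 : ℝ) / q) *
            (∑ k ∈ Finset.Icc 1 (n - 1), ‖x (k + 1) - x k‖ ^ p) ^ ((2 : ℝ) / p)
        else 0) := by
  have hconj : p.HolderConjugate q :=
    Real.holderConjugate_iff.2 ⟨hp, by simpa only [one_div] using hpq⟩
  rw [sq_sum_norm_eq_sq_norm_sum_add (𝕜 := 𝕜), sum_sum_eq_sum_sum_lt_add_swap _ _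
    fun i _ => sub_eq_zero.2 (inner_self_eq_norm_mul_norm (𝕜 := 𝕜) (x i)).symm]
  refine add_le_add le_rfl (sum_le_sum fun i hi => sum_le_sum fun j hj => ?_)
  split_ifs with hij
  · exact (norm_mul_norm_sub_re_inner_add_swap_le (x i) (x j)).trans
      (sq_norm_sub_le_rpow_mul_sum_norm_sub_rpow hconj x (mem_Icc.1 hi).1 hij.le (mem_Icc.1 hj).2)
  · rfl

theorem stmt_12 {𝕜 H : Type*} [RCLike 𝕜] [NormedAddCommGroup H] [InnerProductSpace 𝕜 H]
    (n : ℕ) (x : ℕ → H) (p q : ℝ) (hp : 1 < p) (hq : 1 < q)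
    (hpq : 1 / p + 1 / q = 1) :
    (∑ i ∈ Finset.Icc 1 n, ‖x i‖) ^ 2 ≤ ‖∑ i ∈ Finset.Icc 1 n, x i‖ ^ 2 +
      ∑ i ∈ Finset.Icc 1 n, ∑ j ∈ Finset.Icc 1 n,
        (if i < j then
          ((j : ℝ) - (i : ℝ)) ^ ((2 : ℝ) / q) *
            (∑ k ∈ Finset.Icc 1 (n - 1), ‖x (k + 1) - x k‖ ^ p) ^ ((2 : ℝ) / p)
        else 0) :=
  stmt_12_general (𝕜 := 𝕜) n x p q hp hpq
end

section
/- Let H be an inner product space, y_1,…,y_n ∈ H, and M ≥ m > 0 such that Re⟨M y_j − y_i, y_i − m y_j⟩ ≥ 0 for all 1 ≤ i < j ≤ n. Then (∑_{i=1}^n ‖y_i‖)² ≤ ‖∑_{i=1}^n y_i‖² + (1/2)·((M−m)²/(M+m)) · ∑_{k=1}^{n−1} k·‖y_{k+1}‖². -/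
/-!
Expanding the square, `(∑ ‖yᵢ‖)² - ‖∑ yᵢ‖² = 2 ∑_{i<j} (‖yᵢ‖‖yⱼ‖ - Re⟨yᵢ, yⱼ⟩)`. Each pair condition
`Re⟨M yⱼ - yᵢ, yᵢ - m yⱼ⟩ ≥ 0` reads `‖yᵢ‖² + mM‖yⱼ‖² ≤ (M + m) Re⟨yᵢ, yⱼ⟩`, and together with
AM-GM, `(M + m)‖yᵢ‖‖yⱼ‖ ≤ ‖yᵢ‖² + (M + m)²‖yⱼ‖²/4`, this is a reverse Cauchy–Schwarz inequality
`‖yᵢ‖‖yⱼ‖ - Re⟨yᵢ, yⱼ⟩ ≤ (M - m)²/(4(M + m)) ‖yⱼ‖²`. Summing over the `j - 1` indices `i < j` gives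
the claim.
-/

open Finset
open scoped InnerProductSpace

section ReverseCauchySchwarz

variable {𝕜 H : Type*} [RCLike 𝕜] [NormedAddCommGroup H] [InnerProductSpace 𝕜 H]

theorem re_inner_smul_sub_sub_smul (a b : H) (M m : ℝ) :
    RCLike.re ⟪(M : 𝕜) • b - a, a - (m : 𝕜) • b⟫_𝕜 =
      (M + m) * RCLike.re ⟪a, b⟫_𝕜 - ‖a‖ ^ 2 - M * m * ‖b‖ ^ 2 := by
  simp only [inner_sub_right, inner_sub_left, inner_smul_left, inner_smul_right,
    inner_self_eq_norm_sq_to_K, inner_re_symm (𝕜 := 𝕜) b a, RCLike.conj_ofReal, map_sub,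
    RCLike.mul_re, RCLike.ofReal_re, RCLike.ofReal_im, RCLike.re_ofReal_pow, RCLike.im_ofReal_pow,
    zero_mul, mul_zero, sub_zero]
  ring

theorem norm_mul_norm_sub_re_inner_le_s15 {a b : H} {M m : ℝ} (hMm : 0 < M + m)
    (hab : 0 ≤ RCLike.re ⟪(M : 𝕜) • b - a, a - (m : 𝕜) • b⟫_𝕜) :
    ‖a‖ * ‖b‖ - RCLike.re ⟪a, b⟫_𝕜 ≤ (M - m) ^ 2 / (4 * (M + m)) * ‖b‖ ^ 2 := by
  rw [re_inner_smul_sub_sub_smul] at hab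
  rw [div_mul_eq_mul_div, le_div_iff₀ (by positivity)]
  nlinarith [sq_nonneg (‖a‖ - (M + m) / 2 * ‖b‖)]

end ReverseCauchySchwarz

section SumOfNorms

variable (𝕜 : Type*) {H : Type*} [RCLike 𝕜] [NormedAddCommGroup H] [InnerProductSpace 𝕜 H]

theorem sq_sum_norm_sub_sq_norm_sum_s15 (y : ℕ → H) (n : ℕ) :
    (∑ i ∈ range n, ‖y i‖) ^ 2 - ‖∑ i ∈ range n, y i‖ ^ 2 =
      2 * ∑ j ∈ range n, ∑ i ∈ range j, (‖y i‖ * ‖y j‖ - RCLike.re ⟪y i, y j⟫_𝕜) := by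
  induction n with
  | zero => simp
  | succ n ih =>
    have hnorm := norm_add_sq (𝕜 := 𝕜) (∑ i ∈ range n, y i) (y n)
    have hinner : ∑ i ∈ range n, (‖y i‖ * ‖y n‖ - RCLike.re ⟪y i, y n⟫_𝕜) =
        (∑ i ∈ range n, ‖y i‖) * ‖y n‖ - RCLike.re ⟪∑ i ∈ range n, y i, y n⟫_𝕜 := by
      rw [sum_sub_distrib, ← sum_mul, sum_inner, map_sum]
    rw [sum_range_succ, sum_range_succ, sum_range_succ, hinner, mul_add, ← ih, hnorm]
    ring

theorem sq_sum_norm_le_sq_norm_sum_add {y : ℕ → H} {n : ℕ} {c : ℝ}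
    (h : ∀ j < n, ∀ i < j, ‖y i‖ * ‖y j‖ - RCLike.re ⟪y i, y j⟫_𝕜 ≤ c * ‖y j‖ ^ 2) :
    (∑ i ∈ range n, ‖y i‖) ^ 2 ≤
      ‖∑ i ∈ range n, y i‖ ^ 2 + 2 * c * ∑ j ∈ range n, (j : ℝ) * ‖y j‖ ^ 2 := by
  have hpairs : ∑ j ∈ range n, ∑ i ∈ range j, (‖y i‖ * ‖y j‖ - RCLike.re ⟪y i, y j⟫_𝕜) ≤
      ∑ j ∈ range n, (j : ℝ) * (c * ‖y j‖ ^ 2) :=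
    sum_le_sum fun j hj => by
      simpa using sum_le_sum fun i hi => h j (mem_range.1 hj) i (mem_range.1 hi)
  have hexpand := sq_sum_norm_sub_sq_norm_sum_s15 𝕜 y n
  simp only [mul_left_comm _ c, ← mul_sum] at hpairs
  linarith

end SumOfNorms

theorem sum_Icc_one_eq_sum_range {β : Type*} [AddCommMonoid β] (f : ℕ → β) (n : ℕ) :
    ∑ i ∈ Icc 1 n, f i = ∑ i ∈ range n, f (i + 1) := by
  rw [← Ico_add_one_right_eq_Icc, sum_Ico_eq_sum_range]
  simp [add_comm]

theorem stmt_15 {𝕜 H : Type*} [RCLike 𝕜] [NormedAddCommGroup H] [InnerProductSpace 𝕜 H]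
    (n : ℕ) (y : ℕ → H) (M m : ℝ) (hm : 0 < m) (hMm : m ≤ M)
    (h : ∀ i ∈ Finset.Icc 1 n, ∀ j ∈ Finset.Icc 1 n, i < j →
      0 ≤ RCLike.re (inner 𝕜 ((M : 𝕜) • y j - y i) (y i - (m : 𝕜) • y j) : 𝕜)) :
    (∑ i ∈ Finset.Icc 1 n, ‖y i‖) ^ 2 ≤ ‖∑ i ∈ Finset.Icc 1 n, y i‖ ^ 2 +
      (1 / 2) * ((M - m) ^ 2 / (M + m)) *
        ∑ k ∈ Finset.Icc 1 (n - 1), (k : ℝ) * ‖y (k + 1)‖ ^ 2 := by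
  have hpair : ∀ j < n, ∀ i < j,
      ‖y (i + 1)‖ * ‖y (j + 1)‖ - RCLike.re ⟪y (i + 1), y (j + 1)⟫_𝕜 ≤
        (M - m) ^ 2 / (4 * (M + m)) * ‖y (j + 1)‖ ^ 2 := fun j hj i hi =>
    norm_mul_norm_sub_re_inner_le_s15 (by linarith) <|
      h (i + 1) (mem_Icc.2 ⟨by omega, by omega⟩) (j + 1) (mem_Icc.2 ⟨by omega, by omega⟩)
        (by omega)
  have hweights : ∑ k ∈ Icc 1 (n - 1), (k : ℝ) * ‖y (k + 1)‖ ^ 2 =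
      ∑ j ∈ range n, (j : ℝ) * ‖y (j + 1)‖ ^ 2 := by
    rcases n with _ | n
    · simp
    · simp [sum_Icc_one_eq_sum_range, sum_range_succ']
  rw [sum_Icc_one_eq_sum_range, sum_Icc_one_eq_sum_range, hweights]
  convert sq_sum_norm_le_sq_norm_sum_add 𝕜 hpair using 2
  rw [mul_comm (4 : ℝ), ← div_div]
  ring
end

section
/- Let H be an inner product space, x_1,…,x_n ∈ H \ {0}, and ρ ∈ (0,1) such that ‖x_i − x_j/‖x_j‖‖ ≤ ρ for all 1 ≤ i < j ≤ n. Then √(1 − ρ²)·(∑_{i=1}^n ‖x_i‖)² + (1 − √(1 − ρ²))·∑_{i=1}^n ‖x_i‖² ≤ ‖∑_{i=1}^n x_i‖². -/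
open RCLike Finset
open scoped InnerProductSpace

theorem stmt_18 {𝕜 H : Type*} [RCLike 𝕜] [NormedAddCommGroup H] [InnerProductSpace 𝕜 H]
    (n : ℕ) (x : ℕ → H) (hx : ∀ i ∈ Finset.Icc 1 n, x i ≠ 0)
    (ρ : ℝ) (hρ0 : 0 < ρ) (hρ1 : ρ < 1)
    (h : ∀ i ∈ Finset.Icc 1 n, ∀ j ∈ Finset.Icc 1 n, i < j →
      ‖x i - (‖x j‖ : 𝕜)⁻¹ • x j‖ ≤ ρ) :
    Real.sqrt (1 - ρ ^ 2) * (∑ i ∈ Finset.Icc 1 n, ‖x i‖) ^ 2 +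
        (1 - Real.sqrt (1 - ρ ^ 2)) * ∑ i ∈ Finset.Icc 1 n, ‖x i‖ ^ 2 ≤
      ‖∑ i ∈ Finset.Icc 1 n, x i‖ ^ 2 := by
  set s := Finset.Icc 1 n with hs
  set t := Real.sqrt (1 - ρ ^ 2) with htdef
  have ht2 : t ^ 2 = 1 - ρ ^ 2 := Real.sq_sqrt (by nlinarith)
  have ht0 : 0 ≤ t := Real.sqrt_nonneg _
  have key : ∀ i ∈ s, ∀ j ∈ s, i < j →
      t * (‖x i‖ * ‖x j‖) ≤ re (⟪x i, x j⟫_𝕜) := by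
    intro i hi j hj hij
    have hnj : (0:ℝ) < ‖x j‖ := norm_pos_iff.mpr (hx j hj)
    have hiu := h i hi j hj hij
    set u := ((‖x j‖ : 𝕜)⁻¹ • x j) with hu_def
    have hu : ‖u‖ = 1 := by
      rw [hu_def, norm_smul, norm_inv, RCLike.norm_ofReal, abs_of_pos hnj]
      field_simp
    have hexp : ‖x i - u‖ ^ 2 = ‖x i‖ ^ 2 - 2 * re (⟪x i, u⟫_𝕜) + 1 := by
      rw [@norm_sub_sq 𝕜, hu]; ring
    have hle : ‖x i - u‖ ^ 2 ≤ ρ ^ 2 :=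
      pow_le_pow_left₀ (norm_nonneg _) hiu 2
    have h1 : t * ‖x i‖ ≤ re (⟪x i, u⟫_𝕜) := by
      nlinarith [sq_nonneg (‖x i‖ - t)]
    have hxj : x j = (‖x j‖ : 𝕜) • u := by
      rw [hu_def, smul_smul]
      rw [mul_inv_cancel₀ (by exact_mod_cast hnj.ne'), one_smul]
    have hre : re (⟪x i, x j⟫_𝕜) = ‖x j‖ * re (⟪x i, u⟫_𝕜) := by
      conv_lhs => rw [hxj]
      rw [inner_smul_right, RCLike.re_ofReal_mul]
    rw [hre]
    calc t * (‖x i‖ * ‖x j‖) = ‖x j‖ * (t * ‖x i‖) := by ring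
      _ ≤ ‖x j‖ * re (⟪x i, u⟫_𝕜) := mul_le_mul_of_nonneg_left h1 hnj.le
  have key' : ∀ i ∈ s, ∀ j ∈ s, i ≠ j →
      t * (‖x i‖ * ‖x j‖) ≤ re (⟪x i, x j⟫_𝕜) := by
    intro i hi j hj hij
    rcases hij.lt_or_gt with hlt | hlt
    · exact key i hi j hj hlt
    · rw [inner_re_symm]
      calc t * (‖x i‖ * ‖x j‖) = t * (‖x j‖ * ‖x i‖) := by ring
        _ ≤ re (⟪x j, x i⟫_𝕜) := key j hj i hi hlt
  have expand : ‖∑ i ∈ s, x i‖ ^ 2 = ∑ i ∈ s, ∑ j ∈ s, re (⟪x i, x j⟫_𝕜) := by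
    rw [← @inner_self_eq_norm_sq 𝕜, sum_inner]
    simp [inner_sum, map_sum]
  have lhs_eq : t * (∑ i ∈ s, ‖x i‖) ^ 2 + (1 - t) * ∑ i ∈ s, ‖x i‖ ^ 2
      = ∑ i ∈ s, ∑ j ∈ s,
          (t * (‖x i‖ * ‖x j‖) + if i = j then (1 - t) * ‖x i‖ ^ 2 else 0) := by
    have h1 : ∑ i ∈ s, ∑ j ∈ s, t * (‖x i‖ * ‖x j‖)
        = t * (∑ i ∈ s, ‖x i‖) ^ 2 := by
      rw [sq, Finset.sum_mul_sum, Finset.mul_sum]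
      exact Finset.sum_congr rfl fun i _ => by rw [Finset.mul_sum]
    have h2 : ∑ i ∈ s, ∑ j ∈ s, (if i = j then (1 - t) * ‖x i‖ ^ 2 else 0)
        = (1 - t) * ∑ i ∈ s, ‖x i‖ ^ 2 := by
      rw [Finset.mul_sum]
      exact Finset.sum_congr rfl fun i hi => by
        rw [Finset.sum_ite_eq s i (fun _ => (1 - t) * ‖x i‖ ^ 2), if_pos hi]
    rw [← h1, ← h2, ← Finset.sum_add_distrib]
    exact Finset.sum_congr rfl fun i _ => by rw [← Finset.sum_add_distrib]
  rw [expand, lhs_eq]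
  refine Finset.sum_le_sum fun i hi => Finset.sum_le_sum fun j hj => ?_
  by_cases hij : i = j
  · subst hij
    simp only [if_pos rfl, if_true]
    rw [@inner_self_eq_norm_sq 𝕜]
    nlinarith [sq_nonneg (‖x i‖)]
  · simp only [if_neg hij, add_zero]
    exact key' i hi j hj hij
end
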